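/- arXiv:2605.28885 — 3 statements merged into one kernel-verified Lean document; each statement's English description precedes it below -/
import Mathlib

section
/- Let P, Q be positive definite and H := P^(-1/4) Q^(1/2) P^(-1/4). If B is positive definite and commutes with H, then the matrix R := P^(-1/4) B P^(1/2) B P^(-1/4) is positive definite and satisfies Pol(R^(1/2) P^(1/2)) = Pol(R^(1/2) Q^(1/2)). -/
/-!
With `W = P^(1/4) B P^(-1/4)` we have `R = Wᴴ W`, so `R^(1/2) = |W|` and `W = V R^(1/2)` for a
unitary `V`. Then `V R^(1/2) P^(1/2) = P^(1/4) B P^(1/4)` and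
`V R^(1/2) Q^(1/2) = P^(1/4) (B H) P^(1/4)` are both positive definite (`B H` is, because `B` and
`H` are commuting positive definite matrices), so both polar factors equal `V⋆`.
-/

open scoped Classical
open Matrix
open scoped ComplexOrder


noncomputable def mpow {d : ℕ} (A : Matrix (Fin d) (Fin d) ℂ) (t : ℝ) : Matrix (Fin d) (Fin d) ℂ :=
  if hA : A.IsHermitian then
    (hA.eigenvectorUnitary : Matrix (Fin d) (Fin d) ℂ) *
      Matrix.diagonal (fun i => ((hA.eigenvalues i ^ t : ℝ) : ℂ)) *
      (star (hA.eigenvectorUnitary : Matrix (Fin d) (Fin d) ℂ))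
  else 0


/-- The unitary polar factor of an invertible matrix: the unique unitary `U` with
`star U * X` positive definite (junk value `1` if none exists). -/
noncomputable def polar {d : ℕ} (X : Matrix (Fin d) (Fin d) ℂ) : Matrix (Fin d) (Fin d) ℂ :=
  if h : ∃ U : Matrix (Fin d) (Fin d) ℂ, U ∈ Matrix.unitaryGroup (Fin d) ℂ ∧ (star U * X).PosDef
  then h.choose else 1

open scoped MatrixOrder

lemma Matrix.PosDef.mul_of_commute {n 𝕜 : Type*} [Fintype n] [DecidableEq n] [RCLike 𝕜]
    {A B : Matrix n n 𝕜} (hA : A.PosDef) (hB : B.PosDef) (h : Commute A B) : (A * B).PosDef :=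
  ((hA.isStrictlyPositive.commute_iff hB.isStrictlyPositive).mp h).posDef

section mpow

variable {d : ℕ} {A : Matrix (Fin d) (Fin d) ℂ}

lemma mpow_eq_cfc (t : ℝ) :
    mpow A t = cfc (fun x : ℝ => x ^ t) A := by
  by_cases hA : A.IsHermitian
  · rw [mpow, dif_pos hA, hA.cfc_eq, IsHermitian.cfc, Unitary.conjStarAlgAut_apply]
    rfl
  · rw [mpow, dif_neg hA]
    exact (cfc_apply_of_not_predicate A hA).symm

lemma mpow_eq_rpow (hA : A.PosDef) (t : ℝ) : mpow A t = A ^ t := by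
  rw [mpow_eq_cfc, CFC.rpow_eq_cfc_real hA.posSemidef.nonneg]

lemma mpow_posDef (hA : A.PosDef) (t : ℝ) : (mpow A t).PosDef := by
  rw [mpow_eq_rpow hA]
  exact (IsStrictlyPositive.rpow A t hA.isStrictlyPositive).posDef

lemma mpow_add (hA : A.PosDef) (s t : ℝ) : mpow A (s + t) = mpow A s * mpow A t := by
  simp only [mpow_eq_rpow hA, CFC.rpow_add hA.isUnit]

lemma mpow_neg_mul_mpow (hA : A.PosDef) (t : ℝ) : mpow A (-t) * mpow A t = 1 := by
  simp only [mpow_eq_rpow hA, CFC.rpow_neg_mul_rpow t hA.isStrictlyPositive]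

lemma mpow_half_mul_mpow_half (hA : A.PosDef) : mpow A (1 / 2) * mpow A (1 / 2) = A := by
  rw [← mpow_add hA, add_halves, mpow_eq_rpow hA, CFC.rpow_one A hA.posSemidef.nonneg]

end mpow

section polar

variable {d : ℕ}

lemma polar_eq_of_posDef {X U : Matrix (Fin d) (Fin d) ℂ} (hU : U ∈ unitaryGroup (Fin d) ℂ)
    (hUX : (star U * X).PosDef) : polar X = U := by
  have hex : ∃ V ∈ unitaryGroup (Fin d) ℂ, (star V * X).PosDef := ⟨U, hU, hUX⟩
  obtain ⟨hV, hVX⟩ := hex.choose_spec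
  rw [polar, dif_pos hex]
  set V := hex.choose
  -- `star V * X` and `star U * X` are both positive square roots of `Xᴴ * X`.
  have sq_eq : ∀ W ∈ unitaryGroup (Fin d) ℂ, (star W * X).PosDef → (star W * X) ^ 2 = Xᴴ * X :=
    fun W hW hWX => calc
      (star W * X) ^ 2 = (star W * X)ᴴ * (star W * X) := by rw [sq, hWX.isHermitian.eq]
      _ = Xᴴ * (W * star W) * X := by
        simp only [conjTranspose_mul, star_eq_conjTranspose, conjTranspose_conjTranspose, mul_assoc]
      _ = Xᴴ * X := by rw [Unitary.mul_star_self_of_mem hW, mul_one]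
  have hroot : star V * X = star U * X :=
    (CFC.sq_eq_sq_iff _ _ hVX.posSemidef.nonneg hUX.posSemidef.nonneg).mp
      ((sq_eq V hV hVX).trans (sq_eq U hU hUX).symm)
  have hX : IsUnit X := by
    rw [← one_mul X, ← Unitary.mul_star_self_of_mem hU, mul_assoc]
    exact (Unitary.isUnit_coe (U := ⟨U, hU⟩)).mul hUX.isUnit
  exact star_injective (hX.mul_left_injective hroot)

lemma exists_unitary_mul_sqrt {W : Matrix (Fin d) (Fin d) ℂ} (hW : IsUnit W) :
    ∃ V ∈ unitaryGroup (Fin d) ℂ, W = V * mpow (Wᴴ * W) (1 / 2) := by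
  set S := mpow (Wᴴ * W) (1 / 2)
  have hWW : (Wᴴ * W).PosDef := .conjTranspose_mul_self W (mulVec_injective_of_isUnit hW)
  have hS : S.PosDef := mpow_posDef hWW _
  have hSS : S * S = Wᴴ * W := mpow_half_mul_mpow_half hWW
  have hSdet : IsUnit S.det := (isUnit_iff_isUnit_det S).mp hS.isUnit
  refine ⟨W * S⁻¹, ?_, by rw [mul_assoc, nonsing_inv_mul _ hSdet, mul_one]⟩
  rw [mem_unitaryGroup_iff', star_mul, star_eq_conjTranspose W, hS.isHermitian.inv.star_eq,
    mul_assoc, ← mul_assoc Wᴴ, ← hSS, ← mul_assoc, ← mul_assoc, nonsing_inv_mul _ hSdet, one_mul,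
    mul_nonsing_inv _ hSdet]

lemma polar_sqrt_mul_eq {W X Y : Matrix (Fin d) (Fin d) ℂ} (hW : IsUnit W)
    (hX : (W * X).PosDef) (hY : (W * Y).PosDef) :
    polar (mpow (Wᴴ * W) (1 / 2) * X) = polar (mpow (Wᴴ * W) (1 / 2) * Y) := by
  obtain ⟨V, hV, hWV⟩ := exists_unitary_mul_sqrt hW
  have key : ∀ Z, (W * Z).PosDef → polar (mpow (Wᴴ * W) (1 / 2) * Z) = star V := fun Z hZ =>
    polar_eq_of_posDef (Unitary.star_mem hV) (by rwa [star_star, ← mul_assoc, ← hWV])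
  rw [key X hX, key Y hY]

end polar

/-- If `B` is positive definite and commutes with `H = P^(-1/4) Q^(1/2) P^(-1/4)`, then
`R = P^(-1/4) B P^(1/2) B P^(-1/4)` is positive definite and
`Pol(R^(1/2) P^(1/2)) = Pol(R^(1/2) Q^(1/2))`. -/
theorem holevo_base_sufficient {d : ℕ} {P Q B : Matrix (Fin d) (Fin d) ℂ}
    (hP : P.PosDef) (hQ : Q.PosDef) (hB : B.PosDef)
    (hcomm : B * (mpow P (-(1/4)) * mpow Q (1/2) * mpow P (-(1/4)))
           = (mpow P (-(1/4)) * mpow Q (1/2) * mpow P (-(1/4))) * B) :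
    (mpow P (-(1/4)) * B * mpow P (1/2) * B * mpow P (-(1/4))).PosDef ∧
    polar (mpow (mpow P (-(1/4)) * B * mpow P (1/2) * B * mpow P (-(1/4))) (1/2) * mpow P (1/2))
      = polar (mpow (mpow P (-(1/4)) * B * mpow P (1/2) * B * mpow P (-(1/4))) (1/2) * mpow Q (1/2)) := by
  set T := mpow P (1 / 4)
  set Ti := mpow P (-(1 / 4))
  set H := Ti * mpow Q (1 / 2) * Ti
  have hT : T.PosDef := mpow_posDef hP _
  have hTi : Ti.PosDef := mpow_posDef hP _
  have hTiT : Ti * T = 1 := mpow_neg_mul_mpow hP _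
  have hP2 : mpow P (1 / 2) = T * T := by rw [← mpow_add hP]; norm_num
  have hH : H.PosDef := by
    simpa only [hTi.isHermitian.eq] using
      (mpow_posDef hQ (1 / 2)).conjTranspose_mul_mul_same (mulVec_injective_of_isUnit hTi.isUnit)
  set W := T * B * Ti
  have hW : IsUnit W := (hT.isUnit.mul hB.isUnit).mul hTi.isUnit
  have hR : Ti * B * mpow P (1 / 2) * B * Ti = Wᴴ * W := by
    simp only [W, conjTranspose_mul, hT.isHermitian.eq, hTi.isHermitian.eq, hB.isHermitian.eq,
      hP2, mul_assoc]
  have hWP : W * mpow P (1 / 2) = Tᴴ * B * T := by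
    simp only [W, hP2, hT.isHermitian.eq, mul_assoc, ← mul_assoc Ti, hTiT, one_mul]
  have hWQ : W * mpow Q (1 / 2) = Tᴴ * (B * H) * T := by
    simp only [W, H, hT.isHermitian.eq, mul_assoc, hTiT, mul_one]
  rw [hR]
  refine ⟨.conjTranspose_mul_self W (mulVec_injective_of_isUnit hW),
    polar_sqrt_mul_eq hW ?_ ?_⟩
  · rw [hWP]
    exact hB.conjTranspose_mul_mul_same (mulVec_injective_of_isUnit hT.isUnit)
  · rw [hWQ]
    exact (hB.mul_of_commute hH hcomm).conjTranspose_mul_mul_same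
      (mulVec_injective_of_isUnit hT.isUnit)
end

section
/- Let P, Q, R be positive definite d×d matrices such that Pol(R^(1/2) P^(1/2)) = Pol(R^(1/2) Q^(1/2)). Then the generalized fidelity F_R(P,Q) = Tr[(R^(1/2) P R^(1/2))^(1/2) R^(-1) (R^(1/2) Q R^(1/2))^(1/2)] equals the Holevo fidelity Tr(P^(1/2) Q^(1/2)). -/
/-!
With `S = R^(1/2)`, `A = S P^(1/2)`, `B = S Q^(1/2)` and `U` the common polar factor, both
`U* A` and `U* B` are positive, so `(S P S)^(1/2) = (A A*)^(1/2) = U A*` and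
`(S Q S)^(1/2) = B U*`. The unitaries cancel under the trace, leaving
`Tr(A* R⁻¹ B) = Tr(P^(1/2) (S R⁻¹ S) Q^(1/2)) = Tr(P^(1/2) Q^(1/2))`.
-/

open scoped Classical
open Matrix
open scoped ComplexOrder


/-- Generalized (Afham--Ferrie) fidelity with base `R`. -/
noncomputable def genFid {d : ℕ} (R P Q : Matrix (Fin d) (Fin d) ℂ) : ℂ :=
  Matrix.trace (mpow (mpow R (1/2) * P * mpow R (1/2)) (1/2) * R⁻¹ *
    mpow (mpow R (1/2) * Q * mpow R (1/2)) (1/2))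

lemma unitary_mul_star_eq_mul_star {M : Type*} [Monoid M] [StarMul M] {U X : M}
    (hU : U ∈ unitary M) (hUX : IsSelfAdjoint (star U * X)) : U * star X = X * star U := by
  have hswap : star X * U = star U * X := by simpa using hUX.star_eq
  calc U * star X = U * (star X * U) * star U := by
        rw [mul_assoc, mul_assoc, Unitary.mul_star_self_of_mem hU, mul_one]
    _ = X * star U := by
        rw [hswap, ← mul_assoc, Unitary.mul_star_self_of_mem hU, one_mul]

open scoped MatrixOrder

section

variable {d : ℕ}

lemma mpow_half_eq_sqrt {A : Matrix (Fin d) (Fin d) ℂ} (hA : A.PosSemidef) :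
    mpow A (1/2) = CFC.sqrt A := by
  rw [mpow, dif_pos hA.1, CFC.sqrt_eq_cfc, cfc_nnreal_eq_real _ A, hA.1.cfc_eq]
  simp only [IsHermitian.cfc, Unitary.conjStarAlgAut_apply]
  congr 3
  funext i
  simp [Real.sqrt_eq_rpow, max_eq_left (hA.eigenvalues_nonneg i)]

lemma mpow_half_eq_of_mul_self_eq {A B : Matrix (Fin d) (Fin d) ℂ} (hB : B.PosSemidef)
    (h : B * B = A) : mpow A (1/2) = B := by
  have hA : A.PosSemidef := by
    simpa [← h, hB.1.eq] using posSemidef_conjTranspose_mul_self B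
  rw [mpow_half_eq_sqrt hA]
  exact CFC.sqrt_unique h hB.nonneg

lemma mpow_half_mul_self {A : Matrix (Fin d) (Fin d) ℂ} (hA : A.PosSemidef) :
    mpow A (1/2) * mpow A (1/2) = A := by
  rw [mpow_half_eq_sqrt hA]
  exact CFC.sqrt_mul_sqrt_self A hA.nonneg

lemma Matrix.PosDef.mpow_half {A : Matrix (Fin d) (Fin d) ℂ} (hA : A.PosDef) :
    (mpow A (1/2)).PosDef := by
  rw [mpow_half_eq_sqrt hA.posSemidef, ← isStrictlyPositive_iff_posDef]
  exact hA.isStrictlyPositive.sqrt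

lemma Matrix.PosSemidef.mpow_half {A : Matrix (Fin d) (Fin d) ℂ} (hA : A.PosSemidef) :
    (mpow A (1/2)).PosSemidef := by
  rw [mpow_half_eq_sqrt hA]
  exact (CFC.sqrt_nonneg A).posSemidef

lemma mpow_half_mul_inv_mul_mpow_half {R : Matrix (Fin d) (Fin d) ℂ} (hR : R.PosDef) :
    mpow R (1/2) * R⁻¹ * mpow R (1/2) = 1 := by
  have hS : IsUnit (mpow R (1/2)).det := (isUnit_iff_isUnit_det _).mp hR.mpow_half.isUnit
  calc mpow R (1/2) * R⁻¹ * mpow R (1/2)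
        = mpow R (1/2) * (mpow R (1/2) * mpow R (1/2))⁻¹ * mpow R (1/2) := by
          rw [mpow_half_mul_self hR.posSemidef]
    _ = 1 := by
          rw [Matrix.mul_inv_rev, ← mul_assoc, mul_nonsing_inv _ hS, one_mul,
            nonsing_inv_mul _ hS]

lemma mul_mul_eq_mul_mpow_half_mul_conjTranspose {S P : Matrix (Fin d) (Fin d) ℂ}
    (hS : S.IsHermitian) (hP : P.PosSemidef) :
    S * P * S = S * mpow P (1/2) * (S * mpow P (1/2))ᴴ := by
  conv_lhs => rw [← mpow_half_mul_self hP]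
  rw [conjTranspose_mul, hS.eq, hP.mpow_half.1.eq]
  simp only [mul_assoc]

lemma exists_mem_unitaryGroup_posDef_star_mul {X : Matrix (Fin d) (Fin d) ℂ} (hX : IsUnit X) :
    ∃ U ∈ unitaryGroup (Fin d) ℂ, (star U * X).PosDef := by
  have hXX : (Xᴴ * X).PosDef :=
    PosDef.conjTranspose_mul_self X (mulVec_injective_iff_isUnit.mpr hX)
  set H := mpow (Xᴴ * X) (1/2)
  have hH : H.PosDef := hXX.mpow_half
  have hHdet : IsUnit H.det := (isUnit_iff_isUnit_det H).mp hH.isUnit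
  have hstar : star (X * H⁻¹) = H⁻¹ * Xᴴ := by
    rw [star_eq_conjTranspose, conjTranspose_mul, conjTranspose_nonsing_inv, hH.1.eq]
  have hUX : star (X * H⁻¹) * X = H := by
    rw [hstar, mul_assoc, ← mpow_half_mul_self hXX.posSemidef, ← mul_assoc,
      nonsing_inv_mul _ hHdet, one_mul]
  refine ⟨X * H⁻¹, ?_, by rwa [hUX]⟩
  rw [mem_unitaryGroup_iff', ← mul_assoc, hUX, mul_nonsing_inv _ hHdet]

lemma polar_spec {X : Matrix (Fin d) (Fin d) ℂ} (hX : IsUnit X) :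
    polar X ∈ unitaryGroup (Fin d) ℂ ∧ (star (polar X) * X).PosDef := by
  rw [polar, dif_pos (exists_mem_unitaryGroup_posDef_star_mul hX)]
  exact (exists_mem_unitaryGroup_posDef_star_mul hX).choose_spec

lemma mpow_half_mul_conjTranspose_self {X U : Matrix (Fin d) (Fin d) ℂ}
    (hU : U ∈ unitaryGroup (Fin d) ℂ) (hUX : (star U * X).PosSemidef) :
    mpow (X * Xᴴ) (1/2) = U * Xᴴ := by
  have hswap : U * Xᴴ = X * star U := unitary_mul_star_eq_mul_star hU hUX.1
  apply mpow_half_eq_of_mul_self_eq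
  · have hconj : U * Xᴴ = U * (star U * X) * Uᴴ := by
      rw [hswap, ← mul_assoc, Unitary.mul_star_self_of_mem hU, one_mul, star_eq_conjTranspose]
    exact hconj ▸ hUX.mul_mul_conjTranspose_same U
  · nth_rewrite 1 [hswap]
    rw [mul_assoc, ← mul_assoc (star U), Unitary.star_mul_self_of_mem hU, one_mul]

end

/-- If `Pol(R^(1/2) P^(1/2)) = Pol(R^(1/2) Q^(1/2))`, then the generalized fidelity
`F_R(P,Q)` equals the Holevo fidelity `Tr(P^(1/2) Q^(1/2))`. -/
theorem genFid_eq_holevo_of_polar_eq {d : ℕ} {P Q R : Matrix (Fin d) (Fin d) ℂ}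
    (hP : P.PosDef) (hQ : Q.PosDef) (hR : R.PosDef)
    (hpol : polar (mpow R (1/2) * mpow P (1/2)) = polar (mpow R (1/2) * mpow Q (1/2))) :
    genFid R P Q = Matrix.trace (mpow P (1/2) * mpow Q (1/2)) := by
  set S := mpow R (1/2)
  set A := S * mpow P (1/2)
  set B := S * mpow Q (1/2)
  set U := polar A
  have hS : S.PosDef := hR.mpow_half
  obtain ⟨hU, hUA⟩ := polar_spec (hS.isUnit.mul hP.mpow_half.isUnit)
  have hUB : (star U * B).PosDef := hpol ▸ (polar_spec (hS.isUnit.mul hQ.mpow_half.isUnit)).2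
  have hsqrtP : mpow (S * P * S) (1/2) = U * Aᴴ := by
    rw [mul_mul_eq_mul_mpow_half_mul_conjTranspose hS.1 hP.posSemidef,
      mpow_half_mul_conjTranspose_self hU hUA.posSemidef]
  have hsqrtQ : mpow (S * Q * S) (1/2) = B * star U := by
    rw [mul_mul_eq_mul_mpow_half_mul_conjTranspose hS.1 hQ.posSemidef,
      mpow_half_mul_conjTranspose_self hU hUB.posSemidef, ← star_eq_conjTranspose,
      unitary_mul_star_eq_mul_star hU hUB.1]
  calc genFid R P Q = trace (U * (Aᴴ * R⁻¹ * B) * star U) := by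
        rw [genFid, hsqrtP, hsqrtQ]
        simp only [mul_assoc]
    _ = trace (Aᴴ * R⁻¹ * B) := by
        rw [trace_mul_cycle, Unitary.star_mul_self_of_mem hU, one_mul]
    _ = trace (mpow P (1/2) * (S * R⁻¹ * S) * mpow Q (1/2)) := by
        rw [conjTranspose_mul, hS.1.eq, hP.mpow_half.1.eq]
        simp only [B, mul_assoc]
    _ = trace (mpow P (1/2) * mpow Q (1/2)) := by
        rw [mpow_half_mul_inv_mul_mpow_half hR, mul_one]
end

section
/- Let M be invertible, W unitary, and suppose MW = S D S^(-1) with S invertible and D positive definite. Then a positive definite A satisfies A·M·W positive definite if and only if A = S^(-*) C S^(-1) for some positive definite C commuting with D. -/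
/-!
Congruence by `S` turns `A * M * W = A * S * D * S⁻¹` into `(Sᴴ * A * S) * D`, and congruence by
an invertible matrix preserves positive definiteness. A product of two positive definite matrices
is positive definite exactly when they commute, so the admissible `A` are those for which
`C = Sᴴ * A * S` commutes with `D`.
-/

open scoped Classical
open Matrix
open scoped ComplexOrder

namespace Matrix

variable {n : Type*} [Fintype n] [DecidableEq n]

open scoped MatrixOrder in
theorem PosDef.mul_posDef_iff_commute {𝕜 : Type*} [RCLike 𝕜] {B D : Matrix n n 𝕜}
    (hB : B.PosDef) (hD : D.PosDef) : (B * D).PosDef ↔ Commute B D := by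
  rw [← isStrictlyPositive_iff_posDef,
    hB.isStrictlyPositive.commute_iff hD.isStrictlyPositive]

theorem eq_conjTranspose_inv_mul_mul_inv_iff {R : Type*} [CommRing R] [StarRing R]
    {S A C : Matrix n n R} (hS : IsUnit S) :
    A = (S⁻¹)ᴴ * C * S⁻¹ ↔ Sᴴ * A * S = C := by
  have hdet := (isUnit_iff_isUnit_det S).mp hS
  have hleft : Sᴴ * (S⁻¹)ᴴ = 1 := by
    rw [← conjTranspose_mul, nonsing_inv_mul _ hdet, conjTranspose_one]
  have hright : (S⁻¹)ᴴ * Sᴴ = 1 := by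
    rw [← conjTranspose_mul, mul_nonsing_inv _ hdet, conjTranspose_one]
  constructor
  · rintro rfl
    calc Sᴴ * ((S⁻¹)ᴴ * C * S⁻¹) * S = Sᴴ * (S⁻¹)ᴴ * C * (S⁻¹ * S) := by
          simp only [Matrix.mul_assoc]
      _ = C := by rw [hleft, nonsing_inv_mul _ hdet, Matrix.one_mul, Matrix.mul_one]
  · rintro rfl
    calc A = (S⁻¹)ᴴ * Sᴴ * A * (S * S⁻¹) := by
          rw [hright, mul_nonsing_inv _ hdet, Matrix.one_mul, Matrix.mul_one]
      _ = (S⁻¹)ᴴ * (Sᴴ * A * S) * S⁻¹ := by simp only [Matrix.mul_assoc]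

end Matrix

theorem posDef_mul_iff_commutant_param_general {d : ℕ} {M W S D A : Matrix (Fin d) (Fin d) ℂ}
    (hS : IsUnit S) (hD : D.PosDef) (hMW : M * W = S * D * S⁻¹) (hA : A.PosDef) :
    (A * M * W).PosDef ↔
      ∃ C : Matrix (Fin d) (Fin d) ℂ, C.PosDef ∧ C * D = D * C ∧ A = (S⁻¹)ᴴ * C * S⁻¹ := by
  have hC : (Sᴴ * A * S).PosDef := hA.conjTranspose_mul_mul_same (mulVec_injective_of_isUnit hS)
  have hcongr : Sᴴ * (A * M * W) * S = Sᴴ * A * S * D := by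
    rw [Matrix.mul_assoc A, hMW]
    simp only [Matrix.mul_assoc, nonsing_inv_mul _ ((isUnit_iff_isUnit_det S).mp hS),
      Matrix.mul_one]
  rw [← hS.posDef_star_left_conjugate_iff, star_eq_conjTranspose, hcongr,
    hC.mul_posDef_iff_commute hD]
  constructor
  · intro hcomm
    exact ⟨_, hC, hcomm, (eq_conjTranspose_inv_mul_mul_inv_iff hS).mpr rfl⟩
  · rintro ⟨C, -, hCD, hAC⟩
    rwa [(eq_conjTranspose_inv_mul_mul_inv_iff hS).mp hAC]

/-- Given `MW = S D S⁻¹` with `D` positive definite, a positive definite `A` satisfies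
`A·M·W` positive definite iff `A = (S⁻¹)ᴴ C S⁻¹` for some positive definite `C`
commuting with `D`. -/
theorem posDef_mul_iff_commutant_param {d : ℕ} {M W S D A : Matrix (Fin d) (Fin d) ℂ}
    (hM : IsUnit M) (hW : W ∈ Matrix.unitaryGroup (Fin d) ℂ)
    (hS : IsUnit S) (hD : D.PosDef) (hMW : M * W = S * D * S⁻¹) (hA : A.PosDef) :
    (A * M * W).PosDef ↔
      ∃ C : Matrix (Fin d) (Fin d) ℂ, C.PosDef ∧ C * D = D * C ∧ A = (S⁻¹)ᴴ * C * S⁻¹ :=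
  posDef_mul_iff_commutant_param_general hS hD hMW hA
end
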